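/- With the setup of the Euclidean discrete conformal deformation of a single triangle, the symmetry ∂θ_i/∂u_j = ∂θ_j/∂u_i holds for all distinct i, j (both equal cot θ_k). -/

import Mathlib

/-!
Scaling the two sides `a`, `c` that meet at the vertex opposite `b` by `e^s` turns the cosine-law
quotient for the angle `θ_a` into `(b / 2c) e^{-s} + ((c² - a²) / 2bc) e^s`, whose derivative at
`s = 0` is `-(a / c) cos θ_c`. Differentiating `arccos` divides by `-sin θ_a`, and the law of
sines `sin θ_a / a = sin θ_c / c` turns the result into `cot θ_c`. The same computation with the
roles of `i` and `j` exchanged gives the same `cot θ_k`.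
-/

noncomputable def angOpp (a b c : ℝ) : ℝ := Real.arccos ((b ^ 2 + c ^ 2 - a ^ 2) / (2 * b * c))

open Real

noncomputable def cosOpp (a b c : ℝ) : ℝ := (b ^ 2 + c ^ 2 - a ^ 2) / (2 * b * c)

lemma angOpp_eq_arccos_cosOpp (a b c : ℝ) : angOpp a b c = arccos (cosOpp a b c) := rfl

lemma angOpp_comm (a b c : ℝ) : angOpp a b c = angOpp a c b := by
  rw [angOpp, angOpp, mul_right_comm, add_comm (b ^ 2)]

section Triangle

variable {a b c : ℝ} (h1 : c < a + b) (h2 : a < b + c) (h3 : b < c + a)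
include h1 h2 h3

lemma cosOpp_mem_Ioo : cosOpp a b c ∈ Set.Ioo (-1) 1 := by
  have hbc : 0 < 2 * b * c := by nlinarith
  rw [cosOpp, Set.mem_Ioo, lt_div_iff₀ hbc, div_lt_one hbc]
  constructor <;> nlinarith [mul_pos (sub_pos.2 h1) (sub_pos.2 h2)]

lemma cos_angOpp : cos (angOpp a b c) = cosOpp a b c :=
  have h := cosOpp_mem_Ioo h1 h2 h3
  cos_arccos h.1.le h.2.le

lemma one_sub_cosOpp_sq_pos : 0 < 1 - cosOpp a b c ^ 2 := by
  have h := cosOpp_mem_Ioo h1 h2 h3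
  nlinarith [h.1, h.2]

lemma sin_angOpp_pos : 0 < sin (angOpp a b c) := by
  rw [angOpp_eq_arccos_cosOpp, sin_arccos, sqrt_pos]
  exact one_sub_cosOpp_sq_pos h1 h2 h3

/-- Both sides are `2 · area / (a b c)`; squared, this is Heron's formula written twice. -/
lemma sin_angOpp_div_eq : sin (angOpp a b c) / a = sin (angOpp c a b) / c := by
  have ha : 0 < a := by linarith
  have hb : b ≠ 0 := by linarith
  have hc : 0 < c := by linarith
  have hsq : (sin (angOpp a b c) / a) ^ 2 = (sin (angOpp c a b) / c) ^ 2 := by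
    rw [div_pow, div_pow, angOpp_eq_arccos_cosOpp, angOpp_eq_arccos_cosOpp, sin_arccos,
      sin_arccos, sq_sqrt, sq_sqrt, cosOpp, cosOpp]
    · field_simp
      ring
    exacts [(one_sub_cosOpp_sq_pos h3 h1 h2).le, (one_sub_cosOpp_sq_pos h1 h2 h3).le]
  exact (pow_left_inj₀ (div_pos (sin_angOpp_pos h1 h2 h3) ha).le
    (div_pos (sin_angOpp_pos h3 h1 h2) hc).le two_ne_zero).1 hsq

lemma hasDerivAt_cosOpp_scale :
    HasDerivAt (fun s => cosOpp (exp s * a) b (exp s * c)) (-(a / c) * cosOpp c a b) 0 := by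
  have hb : b ≠ 0 := by linarith
  have hc : c ≠ 0 := by linarith
  have ha : a ≠ 0 := by linarith
  have hfun : (fun s => cosOpp (exp s * a) b (exp s * c))
      = fun s => b / (2 * c) * exp (-s) + (c ^ 2 - a ^ 2) / (2 * b * c) * exp s := by
    funext s
    rw [cosOpp, exp_neg]
    field_simp
    ring
  rw [hfun]
  refine ((((hasDerivAt_neg 0).exp).const_mul _).add ((hasDerivAt_exp 0).const_mul _))
    |>.congr_deriv ?_
  rw [cosOpp, neg_zero, exp_zero]
  field_simp
  ring

lemma hasDerivAt_angOpp_scale :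
    HasDerivAt (fun s => angOpp (exp s * a) b (exp s * c))
      (cos (angOpp c a b) / sin (angOpp c a b)) 0 := by
  have hx := cosOpp_mem_Ioo h1 h2 h3
  have hc : 0 < c := by linarith
  have harccos : HasDerivAt arccos (-(1 / sin (angOpp a b c)))
      (cosOpp (exp 0 * a) b (exp 0 * c)) := by
    rw [exp_zero, one_mul, one_mul, angOpp_eq_arccos_cosOpp, sin_arccos]
    exact hasDerivAt_arccos hx.1.ne' hx.2.ne
  refine (harccos.comp 0 (hasDerivAt_cosOpp_scale h1 h2 h3)).congr_deriv ?_
  have hsin_c : sin (angOpp c a b) = c * (sin (angOpp a b c) / a) := by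
    rw [sin_angOpp_div_eq h1 h2 h3]
    field_simp
  rw [cos_angOpp h3 h1 h2, hsin_c]
  have := (sin_angOpp_pos h1 h2 h3).ne'
  field_simp

lemma hasDerivAt_angOpp_scale_sub (v : ℝ) :
    HasDerivAt (fun t => angOpp (exp (t - v) * a) b (exp (t - v) * c))
      (cos (angOpp c a b) / sin (angOpp c a b)) v :=
  HasDerivAt.comp_sub_const v v (by rw [sub_self]; exact hasDerivAt_angOpp_scale h1 h2 h3)

end Triangle

theorem yamabe_symmetry_general
    (li0 lj0 lk0 : ℝ)
    (ui uj uk : ℝ)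
    (li lj lk : ℝ)
    (hli : li = Real.exp (uj + uk) * li0)
    (hlj : lj = Real.exp (ui + uk) * lj0)
    (hlk : lk = Real.exp (ui + uj) * lk0)
    (h1 : li + lj > lk) (h2 : lj + lk > li) (h3 : lk + li > lj) :
    HasDerivAt
      (fun t : ℝ => angOpp (Real.exp (t + uk) * li0) (Real.exp (ui + uk) * lj0)
        (Real.exp (ui + t) * lk0))
      (Real.cos (angOpp lk li lj) / Real.sin (angOpp lk li lj)) uj ∧
    HasDerivAt
      (fun t : ℝ => angOpp (Real.exp (t + uk) * lj0) (Real.exp (uj + uk) * li0)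
        (Real.exp (uj + t) * lk0))
      (Real.cos (angOpp lk li lj) / Real.sin (angOpp lk li lj)) ui := by
  constructor
  · convert hasDerivAt_angOpp_scale_sub h1 h2 h3 uj using 2 with t
    rw [hli, hlj, hlk, ← mul_assoc, ← mul_assoc, ← exp_add, ← exp_add]
    ring_nf
  · rw [angOpp_comm lk li lj]
    convert hasDerivAt_angOpp_scale_sub (a := lj) (b := li) (c := lk) (by linarith) (by linarith)
      (by linarith) ui using 2 with t
    rw [hli, hlj, hlk, ← mul_assoc, ← mul_assoc, ← exp_add, ← exp_add]
    ring_nf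

/-- Symmetry `∂θ_i/∂u_j = ∂θ_j/∂u_i` in the Euclidean discrete conformal deformation:
both derivatives equal `cot θ_k`. -/
theorem yamabe_symmetry
    (li0 lj0 lk0 : ℝ) (hli0 : 0 < li0) (hlj0 : 0 < lj0) (hlk0 : 0 < lk0)
    (ui uj uk : ℝ)
    (li lj lk : ℝ)
    (hli : li = Real.exp (uj + uk) * li0)
    (hlj : lj = Real.exp (ui + uk) * lj0)
    (hlk : lk = Real.exp (ui + uj) * lk0)
    (h1 : li + lj > lk) (h2 : lj + lk > li) (h3 : lk + li > lj) :
    HasDerivAt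
      (fun t : ℝ => angOpp (Real.exp (t + uk) * li0) (Real.exp (ui + uk) * lj0)
        (Real.exp (ui + t) * lk0))
      (Real.cos (angOpp lk li lj) / Real.sin (angOpp lk li lj)) uj ∧
    HasDerivAt
      (fun t : ℝ => angOpp (Real.exp (t + uk) * lj0) (Real.exp (uj + uk) * li0)
        (Real.exp (uj + t) * lk0))
      (Real.cos (angOpp lk li lj) / Real.sin (angOpp lk li lj)) ui :=
  yamabe_symmetry_general li0 lj0 lk0 ui uj uk li lj lk hli hlj hlk h1 h2 h3
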